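/- Let π, σ ∈ S_n, let A be a partition of {1,...,n} invariant under π (each block is mapped to itself by π) and B a partition invariant under σ. Define |(A,π)| := 2|A| − |π|, where |A| = n − #(A) and |π| is the minimal transposition length of π. Then |(A ∨ B, πσ)| ≤ |(A,π)| + |(B,σ)|. -/

import Mathlib

/-- The minimal number of transpositions needed to write `π` as a product of transpositions. -/
noncomputable def transLength {n : ℕ} (π : Equiv.Perm (Fin n)) : ℕ :=
  sInf {k | ∃ l : List (Equiv.Perm (Fin n)),
    (∀ τ ∈ l, τ.IsSwap) ∧ l.prod = π ∧ l.length = k}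

/-- The number of blocks of a set partition of `Fin n`, encoded as a setoid. -/
noncomputable def numBlocks {n : ℕ} (A : Setoid (Fin n)) : ℕ :=
  Nat.card (Quotient A)

/-- `|(A, π)| := 2|A| - |π|` with `|A| = n - #(A)`, as an integer. -/
noncomputable def pairNorm {n : ℕ} (A : Setoid (Fin n)) (π : Equiv.Perm (Fin n)) : ℤ :=
  2 * ((n : ℤ) - numBlocks A) - (transLength π : ℤ)

/-!
Write `|C| = n - #(C)` for a partition and note that `|π| = |orb π|`, where `orb π` is the orbit
partition. Joining a partition with the block `{a, b}` raises `|·|` by at most one, and by exactly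
one when `a` and `b` lie in different blocks; multiplying `π` by `(a b)` changes `|π|` by one.
Hence, for `A` invariant under `π`, `|(A ∨ orb (a b), π (a b))| ≤ |(A, π)| + 1`: either `a, b` share
a block of `A`, which then does not change, or they lie in different cycles of `π`, which
`(a b)` merges, so `|A|` and `|π|` both grow by one. Factoring `σ` into `|σ|` transpositions gives
`|(A ∨ orb σ, πσ)| ≤ |(A, π)| + |σ|`, and semimodularity of the partition lattice,
`|A ∨ B| - |A ∨ orb σ| ≤ |B| - |orb σ|` for `orb σ ≤ B`, replaces `orb σ` by `B`.
-/

open Equiv Equiv.Perm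

namespace Equiv.Perm

variable {α : Type*}

theorem sameCycle_setoid_le_iff {f : Perm α} {r : Setoid α} :
    SameCycle.setoid f ≤ r ↔ ∀ x, r x (f x) := by
  refine ⟨fun h x => h ⟨1, by simp⟩, fun h => ?_⟩
  rintro x _ ⟨i, rfl⟩
  induction i using Int.induction_on with
  | zero => exact r.refl' x
  | succ k ih =>
    rw [add_comm, zpow_add, zpow_one, mul_apply]
    exact r.trans' ih (h _)
  | pred k ih =>
    rw [sub_eq_neg_add, zpow_add, zpow_neg_one, mul_apply]
    have hf := h (f.symm ((f ^ (-(k : ℤ))) x))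
    rw [apply_symm_apply] at hf
    exact r.trans' ih (r.symm' hf)

theorem sameCycle_setoid_mul_le (f g : Perm α) :
    SameCycle.setoid (f * g) ≤ SameCycle.setoid f ⊔ SameCycle.setoid g := by
  refine sameCycle_setoid_le_iff.2 fun x => ?_
  set r := SameCycle.setoid f ⊔ SameCycle.setoid g
  have hf : r (g x) (f (g x)) := sameCycle_setoid_le_iff.1 le_sup_left (g x)
  have hg : r x (g x) := sameCycle_setoid_le_iff.1 le_sup_right x
  exact r.trans' hg hf

theorem sameCycle_setoid_swap_le_iff [DecidableEq α] {a b : α} {r : Setoid α} :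
    SameCycle.setoid (swap a b) ≤ r ↔ r a b := by
  refine sameCycle_setoid_le_iff.trans ⟨fun h => by simpa using h a, fun h x => ?_⟩
  rw [swap_apply_def]
  split_ifs with hxa hxb
  · exact hxa ▸ h
  · exact hxb ▸ r.symm' h
  · exact r.refl' x

theorem sameCycle_setoid_one : SameCycle.setoid (1 : Perm α) = ⊥ :=
  Setoid.ext fun _ _ => sameCycle_one

end Equiv.Perm

namespace Setoid

variable {α : Type*} {r s t : Setoid α}

theorem map_of_le_surjective (h : r ≤ s) : Function.Surjective (map_of_le h) :=
  fun q => q.inductionOn fun x => ⟨⟦x⟧, rfl⟩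

variable [Finite α]

theorem card_quotient_le_of_le (h : r ≤ s) : Nat.card (Quotient s) ≤ Nat.card (Quotient r) :=
  Nat.card_le_card_of_surjective _ (map_of_le_surjective h)

theorem card_quotient_lt_of_lt (h : r < s) : Nat.card (Quotient s) < Nat.card (Quotient r) := by
  refine (card_quotient_le_of_le h.le).lt_of_ne fun hcard => h.not_ge fun x y hxy => ?_
  have hinj := ((Nat.bijective_iff_surjective_and_card _).2
    ⟨map_of_le_surjective h.le, hcard.symm⟩).injective
  exact Quotient.exact (hinj (Quotient.sound hxy : (⟦x⟧ : Quotient s) = ⟦y⟧))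

theorem card_quotient_le_card_quotient_sup_swap_add_one [DecidableEq α] (r : Setoid α) (a b : α) :
    Nat.card (Quotient r) ≤ Nat.card (Quotient (r ⊔ SameCycle.setoid (swap a b))) + 1 := by
  classical
  -- `f` identifies the classes of `a` and `b`; its range misses at most the class of `b`.
  let f : α → Quotient r := fun x => if r x b then ⟦a⟧ else ⟦x⟧
  have hle : r ⊔ SameCycle.setoid (swap a b) ≤ ker f := by
    refine sup_le (fun x y hxy => ?_) (sameCycle_setoid_swap_le_iff.2 ?_)
    · have hb : r x b ↔ r y b := ⟨r.trans' (r.symm' hxy), r.trans' hxy⟩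
      simp only [ker_def, f, hb]
      split_ifs
      · rfl
      · exact Quotient.sound hxy
    · simp only [ker_def, f, r.refl' b, if_true]
      split_ifs <;> rfl
  have hrange : {(⟦b⟧ : Quotient r)}ᶜ ⊆ Set.range f := by
    intro q hq
    induction q using Quotient.inductionOn with
    | h x => exact ⟨x, if_neg fun h => hq (Quotient.sound h)⟩
  calc Nat.card (Quotient r) = ({⟦b⟧}ᶜ : Set (Quotient r)).ncard + 1 := by
        rw [Set.ncard_compl, Set.ncard_singleton]
        have : Nonempty (Quotient r) := ⟨⟦b⟧⟩
        have : 0 < Nat.card (Quotient r) := Nat.card_pos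
        omega
    _ ≤ (Set.range f).ncard + 1 := Nat.add_le_add_right (Set.ncard_le_ncard hrange) 1
    _ = Nat.card (Quotient (ker f)) + 1 := by
        rw [← Nat.card_coe_set_eq, Nat.card_congr (quotientKerEquivRange f)]
    _ ≤ Nat.card (Quotient (r ⊔ SameCycle.setoid (swap a b))) + 1 := by
        gcongr; exact card_quotient_le_of_le hle

theorem card_quotient_sup_swap_add_one_of_not_rel [DecidableEq α] {a b : α} (h : ¬r a b) :
    Nat.card (Quotient (r ⊔ SameCycle.setoid (swap a b))) + 1 = Nat.card (Quotient r) := by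
  have hlt : r < r ⊔ SameCycle.setoid (swap a b) := by
    refine lt_of_le_of_ne le_sup_left fun heq => h ?_
    rw [heq]
    exact sameCycle_setoid_swap_le_iff.1 le_sup_right
  have := card_quotient_lt_of_lt hlt
  have := card_quotient_le_card_quotient_sup_swap_add_one r a b
  omega

theorem card_quotient_sup_add_card_quotient_le (r : Setoid α) (hst : s ≤ t) :
    Nat.card (Quotient (r ⊔ s)) + Nat.card (Quotient t) ≤
      Nat.card (Quotient (r ⊔ t)) + Nat.card (Quotient s) := by
  classical
  induction hk : Nat.card (Quotient s) using Nat.strong_induction_on generalizing s with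
  | _ k ih =>
  obtain rfl | hlt := hst.eq_or_lt
  · omega
  obtain ⟨a, b, hab, hnab⟩ : ∃ a b, t a b ∧ ¬s a b := by
    by_contra! h
    exact hlt.not_ge fun x y hxy => h x y hxy
  have hs := card_quotient_sup_swap_add_one_of_not_rel hnab
  have hrs := card_quotient_le_card_quotient_sup_swap_add_one (r ⊔ s) a b
  rw [sup_assoc] at hrs
  have := ih _ (by omega) (sup_le hst (sameCycle_setoid_swap_le_iff.2 hab)) rfl
  omega

end Setoid

theorem card_le_length_add_card_quotient_sameCycle {α : Type*} [Finite α] [DecidableEq α]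
    {l : List (Perm α)} (hl : ∀ τ ∈ l, τ.IsSwap) :
    Nat.card α ≤ l.length + Nat.card (Quotient (SameCycle.setoid l.prod)) := by
  induction l with
  | nil => simp [sameCycle_setoid_one, Nat.card_congr Setoid.quotientBotEquiv]
  | cons τ l ih =>
    obtain ⟨a, b, -, rfl⟩ := hl τ List.mem_cons_self
    have hmerge := Setoid.card_quotient_le_card_quotient_sup_swap_add_one
      (SameCycle.setoid l.prod) a b
    have hcoarser := Setoid.card_quotient_le_of_le
      ((sameCycle_setoid_mul_le (swap a b) l.prod).trans_eq (sup_comm _ _))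
    have := ih fun τ hτ => hl τ (List.mem_cons_of_mem _ hτ)
    simp only [List.length_cons, List.prod_cons]
    omega

section transLength

variable {n : ℕ}

theorem exists_transLength_eq (π : Perm (Fin n)) :
    ∃ l : List (Perm (Fin n)), (∀ τ ∈ l, τ.IsSwap) ∧ l.prod = π ∧ l.length = transLength π := by
  obtain ⟨l, hl⟩ := (truncSwapFactors π).out
  have hne : {k | ∃ l : List (Perm (Fin n)),
      (∀ τ ∈ l, τ.IsSwap) ∧ l.prod = π ∧ l.length = k}.Nonempty :=
    ⟨l.length, l, hl.2, hl.1, rfl⟩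
  exact Nat.sInf_mem hne

theorem transLength_prod_le_length {l : List (Perm (Fin n))} (hl : ∀ τ ∈ l, τ.IsSwap) :
    transLength l.prod ≤ l.length :=
  Nat.sInf_le ⟨l, hl, rfl, rfl⟩

theorem transLength_mul_le (π σ : Perm (Fin n)) :
    transLength (π * σ) ≤ transLength π + transLength σ := by
  obtain ⟨l, hl, rfl, hπ⟩ := exists_transLength_eq π
  obtain ⟨m, hm, rfl, hσ⟩ := exists_transLength_eq σ
  rw [← hπ, ← hσ, ← List.length_append, ← List.prod_append]
  exact transLength_prod_le_length fun τ hτ => (List.mem_append.1 hτ).elim (hl τ) (hm τ)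

theorem Equiv.Perm.IsSwap.transLength_le_one {τ : Perm (Fin n)} (hτ : τ.IsSwap) : transLength τ ≤ 1 := by
  simpa using transLength_prod_le_length (l := [τ]) (by simpa using hτ)

theorem sign_eq_neg_one_pow_transLength (π : Perm (Fin n)) : sign π = (-1) ^ transLength π := by
  obtain ⟨l, hl, rfl, hlen⟩ := exists_transLength_eq π
  rw [← hlen, sign_prod_list_swap hl]

theorem le_transLength_add_numBlocks (π : Perm (Fin n)) :
    n ≤ transLength π + numBlocks (SameCycle.setoid π) := by
  obtain ⟨l, hl, rfl, hlen⟩ := exists_transLength_eq π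
  simpa [hlen, numBlocks] using card_le_length_add_card_quotient_sameCycle hl

theorem numBlocks_le (r : Setoid (Fin n)) : numBlocks r ≤ n := by
  simpa [numBlocks] using Nat.card_le_card_of_surjective _ (Quotient.mk_surjective (s := r))

theorem transLength_add_numBlocks_le (π : Perm (Fin n)) :
    transLength π + numBlocks (SameCycle.setoid π) ≤ n := by
  rcases eq_or_ne π 1 with rfl | hπ
  · have := transLength_prod_le_length (l := ([] : List (Perm (Fin n)))) (by simp)
    have := numBlocks_le (SameCycle.setoid (1 : Perm (Fin n)))
    simp only [List.prod_nil, List.length_nil] at *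
    omega
  obtain ⟨x, hx⟩ : ∃ x, π x ≠ x := not_forall.1 fun h => hπ (Equiv.ext h)
  obtain ⟨ρ, hρ_def⟩ : ∃ ρ, ρ = swap x (π x) * π := ⟨_, rfl⟩
  have hxπx : π.SameCycle x (π x) := sameCycle_apply_right.2 (SameCycle.refl π x)
  have hρ : SameCycle.setoid ρ < SameCycle.setoid π := by
    refine lt_of_le_of_ne ?_ fun heq => hx ?_
    · refine hρ_def ▸ (sameCycle_setoid_mul_le _ _).trans_eq (sup_eq_right.2 ?_)
      exact sameCycle_setoid_swap_le_iff.2 hxπx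
    · have : SameCycle.setoid ρ x (π x) := heq ▸ hxπx
      exact (SameCycle.eq_of_left this (by simp [hρ_def, Function.IsFixedPt])).symm
  have hfewer := Setoid.card_quotient_lt_of_lt hρ
  have hρn := numBlocks_le (SameCycle.setoid ρ)
  have hρlen := transLength_add_numBlocks_le ρ
  have hπρ : transLength π ≤ transLength ρ + 1 := by
    calc transLength π = transLength (swap x (π x) * ρ) := by
          rw [hρ_def, ← mul_assoc, swap_mul_self, one_mul]
      _ ≤ transLength ρ + 1 := by
          have := (IsSwap.transLength_le_one ⟨x, π x, hx.symm, rfl⟩)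
          have := transLength_mul_le (swap x (π x)) ρ
          omega
  unfold numBlocks at *
  omega
termination_by n - numBlocks (SameCycle.setoid π)
decreasing_by unfold numBlocks at *; omega

theorem transLength_add_numBlocks (π : Perm (Fin n)) :
    transLength π + numBlocks (SameCycle.setoid π) = n :=
  (transLength_add_numBlocks_le π).antisymm (le_transLength_add_numBlocks π)

theorem transLength_lt_transLength_mul_swap {π : Perm (Fin n)} {a b : Fin n}
    (h : ¬π.SameCycle a b) : transLength π < transLength (π * swap a b) := by
  have hab : a ≠ b := fun hab => h (hab ▸ SameCycle.refl π a)
  -- `π = (π * swap a b) * swap a b` bounds the orbit count of `π * swap a b` by that of `π`;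
  -- the sign then rules out equality of lengths.
  have hparity : transLength (π * swap a b) ≠ transLength π := by
    intro heq
    have := sign_eq_neg_one_pow_transLength (π * swap a b)
    rw [heq, ← sign_eq_neg_one_pow_transLength, Perm.sign_mul, sign_swap hab, mul_neg_one] at this
    exact units_ne_neg_self _ this.symm
  have hle : SameCycle.setoid π ≤
      SameCycle.setoid (π * swap a b) ⊔ SameCycle.setoid (swap a b) := by
    simpa [mul_assoc] using sameCycle_setoid_mul_le (π * swap a b) (swap a b)
  have h1 := Setoid.card_quotient_sup_swap_add_one_of_not_rel (r := SameCycle.setoid π) h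
  have h2 := Setoid.card_quotient_le_of_le (sup_le hle le_sup_right)
  have h3 := Setoid.card_quotient_le_card_quotient_sup_swap_add_one
    (SameCycle.setoid (π * swap a b)) a b
  have := transLength_add_numBlocks π
  have := transLength_add_numBlocks (π * swap a b)
  unfold numBlocks at *
  omega

end transLength

section pairNorm

variable {n : ℕ}

theorem pairNorm_le_pairNorm_of_le {A B : Setoid (Fin n)} (h : A ≤ B) (π : Perm (Fin n)) :
    pairNorm A π ≤ pairNorm B π := by
  have := Setoid.card_quotient_le_of_le h
  unfold pairNorm numBlocks
  omega

theorem pairNorm_sup_swap_mul_swap_le {A : Setoid (Fin n)} {π : Perm (Fin n)}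
    (hA : SameCycle.setoid π ≤ A) {a b : Fin n} (hab : a ≠ b) :
    pairNorm (A ⊔ SameCycle.setoid (swap a b)) (π * swap a b) ≤ pairNorm A π + 1 := by
  by_cases hAab : A a b
  · rw [sup_eq_left.2 (sameCycle_setoid_swap_le_iff.2 hAab)]
    have h1 := transLength_mul_le (π * swap a b) (swap a b)
    have h2 := IsSwap.transLength_le_one ⟨a, b, hab, rfl⟩
    rw [mul_assoc, swap_mul_self, mul_one] at h1
    unfold pairNorm
    omega
  · have h1 := Setoid.card_quotient_sup_swap_add_one_of_not_rel hAab
    have h2 := transLength_lt_transLength_mul_swap fun h => hAab (hA h)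
    unfold pairNorm numBlocks
    omega

theorem pairNorm_sup_mul_list_prod_le {l : List (Perm (Fin n))} (hl : ∀ τ ∈ l, τ.IsSwap)
    {A : Setoid (Fin n)} {π : Perm (Fin n)} (hA : SameCycle.setoid π ≤ A) :
    pairNorm (A ⊔ SameCycle.setoid l.prod) (π * l.prod) ≤ pairNorm A π + l.length := by
  induction l generalizing A π with
  | nil => simp [sameCycle_setoid_one]
  | cons τ l ih =>
    obtain ⟨a, b, hab, rfl⟩ := hl τ List.mem_cons_self
    have hA' : SameCycle.setoid (π * swap a b) ≤ A ⊔ SameCycle.setoid (swap a b) :=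
      (sameCycle_setoid_mul_le _ _).trans (sup_le_sup_right hA _)
    have hcoarser : A ⊔ SameCycle.setoid (swap a b * l.prod) ≤
        A ⊔ SameCycle.setoid (swap a b) ⊔ SameCycle.setoid l.prod := by
      rw [sup_assoc]
      exact sup_le_sup_left (sameCycle_setoid_mul_le _ _) _
    have hl' := ih (fun τ hτ => hl τ (List.mem_cons_of_mem _ hτ)) hA'
    have hstep := pairNorm_sup_swap_mul_swap_le hA hab
    have hmono := pairNorm_le_pairNorm_of_le hcoarser (π * swap a b * l.prod)
    rw [List.prod_cons, ← mul_assoc, List.length_cons]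
    push_cast
    linarith

theorem pairNorm_sup_mul_le {A : Setoid (Fin n)} {π : Perm (Fin n)}
    (hA : SameCycle.setoid π ≤ A) (σ : Perm (Fin n)) :
    pairNorm (A ⊔ SameCycle.setoid σ) (π * σ) ≤ pairNorm A π + transLength σ := by
  obtain ⟨l, hl, rfl, hlen⟩ := exists_transLength_eq σ
  exact hlen ▸ pairNorm_sup_mul_list_prod_le hl hA

end pairNorm

theorem triangle_inequality {n : ℕ} (π σ : Equiv.Perm (Fin n)) (A B : Setoid (Fin n))
    (hA : ∀ x, A x (π x)) (hB : ∀ x, B x (σ x)) :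
    pairNorm (A ⊔ B) (π * σ) ≤ pairNorm A π + pairNorm B σ := by
  have hσB := sameCycle_setoid_le_iff.2 hB
  have hmerge := pairNorm_sup_mul_le (sameCycle_setoid_le_iff.2 hA) σ
  have hsemimodular := Setoid.card_quotient_sup_add_card_quotient_le A hσB
  have hσ := transLength_add_numBlocks σ
  unfold pairNorm numBlocks at *
  omega
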